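/- arXiv:1302.7238 — 4 statements merged into one kernel-verified Lean document; each statement's English description precedes it below -/
import Mathlib

section
/- If {E, F, F⁻¹} is a partition of A × A where E is an equivalence relation and F is a transitive relation, then F is E-saturated (and hence R = E ∪ F is transitive). -/
namespace Relation

variable {α : Type*} {E F : α → α → Prop}

/-- Otherwise `x E z` or `z F x`, whence `y E z` or `y F x`, and either contradicts `E ∩ F = ∅`. -/
theorem rel_of_equivalence_of_rel (hE : Equivalence E) (hF : ∀ ⦃x y z⦄, F x y → F y z → F x z)
    (hdisj : ∀ x y, ¬ (E x y ∧ F x y)) (hcover : ∀ x y, E x y ∨ F x y ∨ F y x)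
    {x y z : α} (hxy : E x y) (hyz : F y z) : F x z := by
  rcases hcover x z with hxz | hxz | hzx
  · exact absurd ⟨hE.trans (hE.symm hxy) hxz, hyz⟩ (hdisj y z)
  · exact hxz
  · exact absurd ⟨hE.symm hxy, hF hyz hzx⟩ (hdisj y x)

theorem rel_of_rel_of_equivalence (hE : Equivalence E) (hF : ∀ ⦃x y z⦄, F x y → F y z → F x z)
    (hdisj : ∀ x y, ¬ (E x y ∧ F x y)) (hcover : ∀ x y, E x y ∨ F x y ∨ F y x)
    {x y z : α} (hxy : F x y) (hyz : E y z) : F x z :=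
  rel_of_equivalence_of_rel (E := flip E) (F := flip F)
    ⟨hE.refl, hE.symm, fun h₁ h₂ => hE.trans h₂ h₁⟩ (fun _ _ _ h₁ h₂ => hF h₂ h₁)
    (fun x y => hdisj y x) (fun x y => hcover y x) hyz hxy

theorem or_trans_of_saturated (hE : ∀ ⦃x y z⦄, E x y → E y z → E x z)
    (hF : ∀ ⦃x y z⦄, F x y → F y z → F x z)
    (hEF : ∀ ⦃x y z⦄, E x y → F y z → F x z) (hFE : ∀ ⦃x y z⦄, F x y → E y z → F x z)
    ⦃x y z : α⦄ : E x y ∨ F x y → E y z ∨ F y z → E x z ∨ F x z := by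
  rintro (hxy | hxy) (hyz | hyz)
  · exact .inl (hE hxy hyz)
  · exact .inr (hEF hxy hyz)
  · exact .inr (hFE hxy hyz)
  · exact .inr (hF hxy hyz)

end Relation

open Relation in
theorem saturated_of_partition_general {A : Type*} (E F : A → A → Prop)
    (hE : Equivalence E)
    (hF : ∀ x y z, F x y → F y z → F x z)
    (hdisjEF : ∀ x y, ¬ (E x y ∧ F x y))
    (hcover : ∀ x y, E x y ∨ F x y ∨ F y x) :
    ((∀ x y z, E x y → F y z → F x z) ∧ (∀ x y z, F x y → E y z → F x z)) ∧
    (∀ x y z, (E x y ∨ F x y) → (E y z ∨ F y z) → (E x z ∨ F x z)) := by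
  have hEF (x y z : A) : E x y → F y z → F x z := rel_of_equivalence_of_rel hE hF hdisjEF hcover
  have hFE (x y z : A) : F x y → E y z → F x z := rel_of_rel_of_equivalence hE hF hdisjEF hcover
  exact ⟨⟨hEF, hFE⟩, or_trans_of_saturated (fun _ _ _ => hE.trans) hF hEF hFE⟩

theorem saturated_of_partition {A : Type*} (E F : A → A → Prop)
    (hE : Equivalence E)
    (hF : ∀ x y z, F x y → F y z → F x z)
    (hdisjEF : ∀ x y, ¬ (E x y ∧ F x y))
    (hdisjEFinv : ∀ x y, ¬ (E x y ∧ F y x))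
    (hdisjFFinv : ∀ x y, ¬ (F x y ∧ F y x))
    (hcover : ∀ x y, E x y ∨ F x y ∨ F y x) :
    ((∀ x y z, E x y → F y z → F x z) ∧ (∀ x y z, F x y → E y z → F x z)) ∧
    (∀ x y z, (E x y ∨ F x y) → (E y z ∨ F y z) → (E x z ∨ F x z)) :=
  saturated_of_partition_general E F hE hF hdisjEF hcover
end

section
/- Let R be an asymmetric and transitive binary relation on A and let ~ be the equivalence relation generated by (transitive closure of) the incomparability relation E_R. If x and y lie in distinct equivalence classes and xRy, then x'Ry' for all x' ~ x and y' ~ y. -/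
/-!
If `R a b` and `a` is incomparable to `c`, then `R b c` is impossible (it would give `R a c`),
so `c` is either below `b` or incomparable to it. Walking along a chain of incomparable steps
from `x` to `x'`, the relation `R · y` can therefore only be lost by reaching an element
incomparable to `y`, which would put `x` and `y` on the same indifference curve. The same
argument for `swap R` moves `y` along its curve.
-/

open Function Relation

section

variable {A : Type*} {R : A → A → Prop} [IsTrans A R]

theorem IncompRel.rel_or_incompRel_of_rel {a b c : A} (hac : IncompRel R a c) (hab : R a b) :
    R c b ∨ IncompRel R c b :=
  or_iff_not_imp_left.2 fun hcb => ⟨hcb, fun hbc => hac.1 (_root_.trans hab hbc)⟩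

theorem rel_of_reflTransGen_incompRel_left {x y x' : A} (hxy : R x y)
    (hxy' : ¬ TransGen (IncompRel R) x y) (hx : ReflTransGen (IncompRel R) x x') : R x' y := by
  induction hx with
  | refl => exact hxy
  | tail hxb hbc hby =>
    exact (hbc.rel_or_incompRel_of_rel hby).resolve_right fun hcy =>
      hxy' ((TransGen.tail' hxb hbc).tail hcy)

theorem rel_of_reflTransGen_incompRel_right {x y y' : A} (hxy : R x y)
    (hxy' : ¬ TransGen (IncompRel R) x y) (hy : ReflTransGen (IncompRel R) y y') : R x y' := by
  rw [← incompRel_swap] at hxy' hy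
  exact rel_of_reflTransGen_incompRel_left (R := swap R) hxy (fun h => hxy' (symm h)) hy

end

theorem strict_order_respects_indifference_curves_general {A : Type*} (R : A → A → Prop)
    (htrans : ∀ x y z, R x y → R y z → R x z) :
    ∀ x y, ¬ Relation.TransGen (fun a b => ¬ R a b ∧ ¬ R b a) x y → R x y →
      ∀ x' y', Relation.TransGen (fun a b => ¬ R a b ∧ ¬ R b a) x x' →
        Relation.TransGen (fun a b => ¬ R a b ∧ ¬ R b a) y y' → R x' y' := by
  have : IsTrans A R := ⟨htrans⟩
  intro x y hxy' hxy x' y' hx hy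
  have hx'y : R x' y := rel_of_reflTransGen_incompRel_left hxy hxy' hx.to_reflTransGen
  have hx'y' : ¬ TransGen (IncompRel R) x' y := fun h => hxy' (hx.trans h)
  exact rel_of_reflTransGen_incompRel_right hx'y hx'y' hy.to_reflTransGen

theorem strict_order_respects_indifference_curves {A : Type*} (R : A → A → Prop)
    (hasymm : ∀ x y, R x y → ¬ R y x)
    (htrans : ∀ x y z, R x y → R y z → R x z) :
    ∀ x y, ¬ Relation.TransGen (fun a b => ¬ R a b ∧ ¬ R b a) x y → R x y →
      ∀ x' y', Relation.TransGen (fun a b => ¬ R a b ∧ ¬ R b a) x x' →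
        Relation.TransGen (fun a b => ¬ R a b ∧ ¬ R b a) y y' → R x' y' :=
  strict_order_respects_indifference_curves_general R htrans
end

section
/- Let R be a preorder on A with asymmetric part F = P_R, let E_F^(t) be the transitive closure of the incomparability relation of F, and let A' = A / E_F^(t). Then the weak factor-relation R' on A' (defined by x̄ R' ȳ iff for every x' ∈ x̄ there exists y' ∈ ȳ with x'Ry') is a linear order (reflexive, transitive, antisymmetric, complete). -/
/-!
Write `F` for the strict part of `R` and `E` for `F`-incomparability. If `x F y` and `x E x'`,
then `x' F y` or `x' E y`, because `y F x'` would give `x F x'`. So if `x F y` with `x`, `y` in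
different classes, following a chain of `E`-steps from `x` never reaches the class of `y`, and
every element of the class of `x` is `F`-below `y`. Since elements of different classes are
`F`-comparable, this gives both completeness and antisymmetry of the weak factor-relation.
-/

open Relation

namespace WeakFactor

variable {A : Type*}

def StrictPart (R : A → A → Prop) (x y : A) : Prop :=
  R x y ∧ ¬ R y x

instance {R : A → A → Prop} [IsTrans A R] : IsTrans A (StrictPart R) :=
  ⟨fun _ _ _ ⟨hxy, hyx⟩ ⟨hyz, _⟩ => ⟨trans_of R hxy hyz, fun hzx => hyx (trans_of R hyz hzx)⟩⟩

section IncompClosure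

variable {r : A → A → Prop} {x x' y : A}

theorem IncompRel.rel_or_incompRel_of_rel [IsTrans A r] (hxx' : IncompRel r x x') (hxy : r x y) :
    r x' y ∨ IncompRel r x' y :=
  or_iff_not_imp_left.2 fun hx'y => ⟨hx'y, fun hyx' => hxx'.1 (trans_of r hxy hyx')⟩

theorem rel_or_rel_of_not_transGen_incompRel (hxy : ¬ TransGen (IncompRel r) x y) :
    r x y ∨ r y x := by
  by_contra! h
  exact hxy (.single h)

theorem rel_of_rel_of_transGen_incompRel [IsTrans A r] (hxy : r x y)
    (hsep : ¬ TransGen (IncompRel r) x y) (hxx' : TransGen (IncompRel r) x x') : r x' y := by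
  induction hxx' with
  | single h =>
    exact (IncompRel.rel_or_incompRel_of_rel h hxy).resolve_right fun h' =>
      hsep (.head h (.single h'))
  | tail hxz hzx' ih =>
    exact (IncompRel.rel_or_incompRel_of_rel hzx' ih).resolve_right fun h' =>
      hsep ((hxz.tail hzx').tail h')

end IncompClosure

def WeakFactorRel (s : Setoid A) (R : A → A → Prop) (a b : Quotient s) : Prop :=
  ∀ x', Quotient.mk s x' = a → ∃ y', Quotient.mk s y' = b ∧ R x' y'

variable {s : Setoid A} {R : A → A → Prop}

theorem not_transGen_incompRel_of_mk_ne
    (hs : ∀ a b, s.r a b ↔ TransGen (IncompRel (StrictPart R)) a b) {x y : A}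
    (hne : Quotient.mk s x ≠ Quotient.mk s y) : ¬ TransGen (IncompRel (StrictPart R)) x y :=
  fun h => hne (Quotient.sound ((hs x y).2 h))

theorem transGen_incompRel_of_mk_eq
    (hs : ∀ a b, s.r a b ↔ TransGen (IncompRel (StrictPart R)) a b) {x y : A}
    (heq : Quotient.mk s x = Quotient.mk s y) : TransGen (IncompRel (StrictPart R)) x y :=
  (hs x y).1 (Quotient.exact heq)

theorem weakFactorRel_refl [Std.Refl R] (a : Quotient s) : WeakFactorRel s R a a :=
  fun x hx => ⟨x, hx, refl_of R x⟩

theorem weakFactorRel_trans [IsTrans A R] {a b c : Quotient s} (hab : WeakFactorRel s R a b)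
    (hbc : WeakFactorRel s R b c) : WeakFactorRel s R a c := fun x hx =>
  let ⟨y, hy, hxy⟩ := hab x hx
  let ⟨z, hz, hyz⟩ := hbc y hy
  ⟨z, hz, trans_of R hxy hyz⟩

theorem weakFactorRel_mk_of_strictPart [IsTrans A R]
    (hs : ∀ a b, s.r a b ↔ TransGen (IncompRel (StrictPart R)) a b) {x y : A}
    (hxy : StrictPart R x y) (hne : Quotient.mk s x ≠ Quotient.mk s y) :
    WeakFactorRel s R (Quotient.mk s x) (Quotient.mk s y) := fun _ hx' =>
  ⟨y, rfl, (rel_of_rel_of_transGen_incompRel hxy (not_transGen_incompRel_of_mk_ne hs hne)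
    (transGen_incompRel_of_mk_eq hs hx'.symm)).1⟩

theorem weakFactorRel_antisymm [IsTrans A R]
    (hs : ∀ a b, s.r a b ↔ TransGen (IncompRel (StrictPart R)) a b) {a b : Quotient s}
    (hab : WeakFactorRel s R a b) (hba : WeakFactorRel s R b a) : a = b := by
  induction a using Quotient.inductionOn with | h x =>
  obtain ⟨y, rfl, hxy⟩ := hab x rfl
  obtain ⟨x', hx', hyx'⟩ := hba y rfl
  by_contra hne
  have hsep := not_transGen_incompRel_of_mk_ne hs hne
  have hF : StrictPart R x y :=
    (rel_or_rel_of_not_transGen_incompRel hsep).resolve_right fun hyx => hyx.2 hxy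
  exact (rel_of_rel_of_transGen_incompRel hF hsep (transGen_incompRel_of_mk_eq hs hx'.symm)).2 hyx'

theorem weakFactorRel_total [Std.Refl R] [IsTrans A R]
    (hs : ∀ a b, s.r a b ↔ TransGen (IncompRel (StrictPart R)) a b) (a b : Quotient s) :
    WeakFactorRel s R a b ∨ WeakFactorRel s R b a := by
  induction a, b using Quotient.inductionOn₂ with | h x y =>
  by_cases hxy : Quotient.mk s x = Quotient.mk s y
  · exact .inl (hxy ▸ weakFactorRel_refl _)
  · exact (rel_or_rel_of_not_transGen_incompRel (not_transGen_incompRel_of_mk_ne hs hxy)).imp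
      (weakFactorRel_mk_of_strictPart hs · hxy) (weakFactorRel_mk_of_strictPart hs · (Ne.symm hxy))

end WeakFactor

open WeakFactor in
theorem weak_factor_relation_linear_order {A : Type*} (R : A → A → Prop)
    (hrefl : ∀ x, R x x)
    (htrans : ∀ x y z, R x y → R y z → R x z)
    (s : Setoid A)
    (hs : ∀ a b, s.r a b ↔ Relation.TransGen
      (fun x y => ¬ (R x y ∧ ¬ R y x) ∧ ¬ (R y x ∧ ¬ R x y)) a b) :
    (let R' : Quotient s → Quotient s → Prop := fun a b =>
      ∀ x', Quotient.mk s x' = a → ∃ y', Quotient.mk s y' = b ∧ R x' y'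
     (∀ a, R' a a) ∧
     (∀ a b c, R' a b → R' b c → R' a c) ∧
     (∀ a b, R' a b → R' b a → a = b) ∧
     (∀ a b, R' a b ∨ R' b a)) := by
  have : Std.Refl R := ⟨hrefl⟩
  have : IsTrans A R := ⟨htrans⟩
  exact ⟨weakFactorRel_refl, fun _ _ _ => weakFactorRel_trans,
    fun _ _ => weakFactorRel_antisymm hs, weakFactorRel_total hs⟩
end

section
/- Let R be a preorder on A whose asymmetric part F = P_R is negatively transitive. Then the incomparability relation 𝓔 = E_F of F is an equivalence relation, 𝓔 = I_R ∪ E_R (where E_R is the R-incomparability relation), F is 𝓔-saturated, and the factor-relation of R on A/𝓔 is a linear order whose strict part is the factor-relation of F. -/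
/-!
The asymmetric part `F` of `R` is asymmetric and negatively transitive, i.e. a strict weak
order, so its incomparability relation is an equivalence and `F` respects it. Hence `F`
descends to a strict total order on the classes. The factor-relation of `R` is the reflexive
closure of that order: if `x` and `y` are `R`-incomparable they lie in the same class, whose
factor-relation holds by reflexivity of `R`, so `R'(⟦x⟧, ⟦y⟧) ↔ ¬ F y x`.
-/

namespace IsOrderConnected

variable {α : Type*} {r : α → α → Prop} [IsOrderConnected α r] {a a' b b' c : α}

theorem incompRel_trans (hab : IncompRel r a b) (hbc : IncompRel r b c) : IncompRel r a c :=
  ⟨neg_trans hab.1 hbc.1, neg_trans hbc.2 hab.2⟩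

theorem equivalence_incompRel [Std.Irrefl r] : Equivalence (IncompRel r) :=
  ⟨IncompRel.refl r, IncompRel.symm, incompRel_trans⟩

theorem rel_of_incompRel_of_rel (ha : IncompRel r a a') (h : r a b) : r a' b :=
  (conn a a' b h).resolve_left ha.1

theorem rel_of_rel_of_incompRel (h : r a b) (hb : IncompRel r b b') : r a b' :=
  (conn a b' b h).resolve_right hb.2

theorem rel_of_incompRel (ha : IncompRel r a a') (hb : IncompRel r b b') (h : r a b) :
    r a' b' :=
  rel_of_rel_of_incompRel (rel_of_incompRel_of_rel ha h) hb

end IsOrderConnected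

section StrictPart

variable {α : Type*}

def strictPart (R : α → α → Prop) (a b : α) : Prop :=
  R a b ∧ ¬ R b a

instance (R : α → α → Prop) : Std.Asymm (strictPart R) :=
  ⟨fun _ _ hab hba => hab.2 hba.1⟩

theorem incompRel_strictPart_iff {R : α → α → Prop} {a b : α} :
    IncompRel (strictPart R) a b ↔ AntisymmRel R a b ∨ IncompRel R a b := by
  unfold IncompRel AntisymmRel strictPart
  tauto

end StrictPart

section FactorRel

variable {α : Type*} (s : Setoid α)

def factorRel (S : α → α → Prop) (a b : Quotient s) : Prop :=
  ∃ x y, Quotient.mk s x = a ∧ Quotient.mk s y = b ∧ S x y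

variable {s}

theorem factorRel_mk_mk_iff {S : α → α → Prop}
    (hS : ∀ x x' y y', s.r x x' → s.r y y' → S x y → S x' y') {x y : α} :
    factorRel s S (Quotient.mk s x) (Quotient.mk s y) ↔ S x y := by
  constructor
  · rintro ⟨x', y', hx, hy, h⟩
    exact hS x' x y' y (Quotient.exact hx) (Quotient.exact hy) h
  · exact fun h => ⟨x, y, rfl, rfl, h⟩

variable {r : α → α → Prop} [IsOrderConnected α r] (hs : ∀ a b, s.r a b ↔ IncompRel r a b)
include hs

theorem factorRel_mk_mk_iff_of_incompRel {x y : α} :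
    factorRel s r (Quotient.mk s x) (Quotient.mk s y) ↔ r x y :=
  factorRel_mk_mk_iff fun _ _ _ _ hx hy =>
    IsOrderConnected.rel_of_incompRel ((hs _ _).1 hx) ((hs _ _).1 hy)

theorem isOrderConnected_factorRel : IsOrderConnected (Quotient s) (factorRel s r) := by
  refine ⟨fun a b c => Quotient.inductionOn₃ a b c fun x y z => ?_⟩
  simp only [factorRel_mk_mk_iff_of_incompRel hs]
  exact IsOrderConnected.conn x y z

theorem asymm_factorRel [Std.Asymm r] : Std.Asymm (factorRel s r) := by
  refine ⟨fun a b => Quotient.inductionOn₂ a b fun x y => ?_⟩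
  simp only [factorRel_mk_mk_iff_of_incompRel hs]
  exact asymm

theorem eq_of_incompRel_factorRel {a b : Quotient s} (h : IncompRel (factorRel s r) a b) :
    a = b := by
  induction a, b using Quotient.inductionOn₂ with
  | h x y =>
    simp only [IncompRel, factorRel_mk_mk_iff_of_incompRel hs] at h
    exact Quotient.sound ((hs x y).2 h)

end FactorRel

theorem factorRel_mk_mk_iff_not_strictPart {α : Type*} {R : α → α → Prop} (hrefl : ∀ x, R x x)
    [IsOrderConnected α (strictPart R)] {s : Setoid α}
    (hs : ∀ a b, s.r a b ↔ IncompRel (strictPart R) a b) {x y : α} :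
    factorRel s R (Quotient.mk s x) (Quotient.mk s y) ↔ ¬ strictPart R y x := by
  constructor
  · rintro ⟨x', y', hx, hy, hxy⟩ hyx
    have hyx' := IsOrderConnected.rel_of_incompRel ((hs y y').1 (Quotient.exact hy.symm))
      ((hs x x').1 (Quotient.exact hx.symm)) hyx
    exact hyx'.2 hxy
  · intro hyx
    by_cases hxy : R x y
    · exact ⟨x, y, rfl, rfl, hxy⟩
    · have hxy' : Quotient.mk s x = Quotient.mk s y :=
        Quotient.sound ((hs x y).2 ⟨fun h => hxy h.1, fun h => hyx ⟨h.1, hxy⟩⟩)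
      exact ⟨x, x, rfl, hxy', hrefl x⟩

theorem linear_and_lt_iff_of_le_iff_not_lt {β : Type*} {lt le : β → β → Prop} [Std.Asymm lt]
    [IsOrderConnected β lt] (h_eq : ∀ a b, IncompRel lt a b → a = b)
    (hle : ∀ a b, le a b ↔ ¬ lt b a) :
    (∀ a, le a a) ∧ (∀ a b c, le a b → le b c → le a c) ∧ (∀ a b, le a b → le b a → a = b) ∧
      (∀ a b, le a b ∨ le b a) ∧ (∀ a b, lt a b ↔ (le a b ∧ ¬ le b a)) := by
  simp only [hle, not_not]
  refine ⟨fun a => irrefl a, fun a b c hab hbc => IsOrderConnected.neg_trans hbc hab,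
    fun a b hab hba => h_eq a b ⟨hba, hab⟩, fun a b => ?_, fun a b => ?_⟩
  · by_contra! h
    exact asymm h.1 h.2
  · exact ⟨fun h => ⟨asymm h, h⟩, And.right⟩

theorem bubbling_factor_linear_order_general {A : Type*} (R : A → A → Prop)
    (hrefl : ∀ x, R x x)
    (hnegtrans : ∀ x z, (R x z ∧ ¬ R z x) → ∀ y, (R x y ∧ ¬ R y x) ∨ (R y z ∧ ¬ R z y))
    (s : Setoid A)
    (hs : ∀ a b, s.r a b ↔ (¬ (R a b ∧ ¬ R b a) ∧ ¬ (R b a ∧ ¬ R a b))) :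
    -- 𝓔 = E_F is an equivalence relation
    Equivalence (fun a b => ¬ (R a b ∧ ¬ R b a) ∧ ¬ (R b a ∧ ¬ R a b)) ∧
    -- 𝓔 = I_R ∪ E_R
    (∀ a b, (¬ (R a b ∧ ¬ R b a) ∧ ¬ (R b a ∧ ¬ R a b)) ↔
      ((R a b ∧ R b a) ∨ (¬ R a b ∧ ¬ R b a))) ∧
    -- F is 𝓔-saturated
    ((∀ x x' y, s.r x x' → (R x y ∧ ¬ R y x) → (R x' y ∧ ¬ R y x')) ∧
     (∀ x y y', (R x y ∧ ¬ R y x) → s.r y y' → (R x y' ∧ ¬ R y' x))) ∧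
    -- the factor-relation of R is a linear order with strict part the factor of F
    (let R' : Quotient s → Quotient s → Prop := fun a b =>
       ∃ x y, Quotient.mk s x = a ∧ Quotient.mk s y = b ∧ R x y
     let F' : Quotient s → Quotient s → Prop := fun a b =>
       ∃ x y, Quotient.mk s x = a ∧ Quotient.mk s y = b ∧ (R x y ∧ ¬ R y x)
     (∀ a, R' a a) ∧
     (∀ a b c, R' a b → R' b c → R' a c) ∧
     (∀ a b, R' a b → R' b a → a = b) ∧
     (∀ a b, R' a b ∨ R' b a) ∧
     (∀ a b, F' a b ↔ (R' a b ∧ ¬ R' b a))) := by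
  have : IsOrderConnected A (strictPart R) := ⟨fun x y z h => hnegtrans x z h y⟩
  have hs' : ∀ a b, s.r a b ↔ IncompRel (strictPart R) a b := hs
  refine ⟨IsOrderConnected.equivalence_incompRel (r := strictPart R),
    fun a b => incompRel_strictPart_iff,
    ⟨fun x x' y hx =>
        IsOrderConnected.rel_of_incompRel_of_rel (r := strictPart R) ((hs' x x').1 hx),
      fun x y y' h hy =>
        IsOrderConnected.rel_of_rel_of_incompRel (r := strictPart R) h ((hs' y y').1 hy)⟩, ?_⟩
  intro R' F'
  have := asymm_factorRel hs'
  have := isOrderConnected_factorRel hs'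
  refine linear_and_lt_iff_of_le_iff_not_lt (lt := factorRel s (strictPart R))
    (fun a b => eq_of_incompRel_factorRel hs') fun a b => ?_
  induction a, b using Quotient.inductionOn₂ with
  | h x y =>
    exact (factorRel_mk_mk_iff_not_strictPart hrefl hs').trans
      (not_congr (factorRel_mk_mk_iff_of_incompRel hs').symm)

theorem bubbling_factor_linear_order {A : Type*} (R : A → A → Prop)
    (hrefl : ∀ x, R x x)
    (htrans : ∀ x y z, R x y → R y z → R x z)
    (hnegtrans : ∀ x z, (R x z ∧ ¬ R z x) → ∀ y, (R x y ∧ ¬ R y x) ∨ (R y z ∧ ¬ R z y))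
    (s : Setoid A)
    (hs : ∀ a b, s.r a b ↔ (¬ (R a b ∧ ¬ R b a) ∧ ¬ (R b a ∧ ¬ R a b))) :
    -- 𝓔 = E_F is an equivalence relation
    Equivalence (fun a b => ¬ (R a b ∧ ¬ R b a) ∧ ¬ (R b a ∧ ¬ R a b)) ∧
    -- 𝓔 = I_R ∪ E_R
    (∀ a b, (¬ (R a b ∧ ¬ R b a) ∧ ¬ (R b a ∧ ¬ R a b)) ↔
      ((R a b ∧ R b a) ∨ (¬ R a b ∧ ¬ R b a))) ∧
    -- F is 𝓔-saturated
    ((∀ x x' y, s.r x x' → (R x y ∧ ¬ R y x) → (R x' y ∧ ¬ R y x')) ∧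
     (∀ x y y', (R x y ∧ ¬ R y x) → s.r y y' → (R x y' ∧ ¬ R y' x))) ∧
    -- the factor-relation of R is a linear order with strict part the factor of F
    (let R' : Quotient s → Quotient s → Prop := fun a b =>
       ∃ x y, Quotient.mk s x = a ∧ Quotient.mk s y = b ∧ R x y
     let F' : Quotient s → Quotient s → Prop := fun a b =>
       ∃ x y, Quotient.mk s x = a ∧ Quotient.mk s y = b ∧ (R x y ∧ ¬ R y x)
     (∀ a, R' a a) ∧
     (∀ a b c, R' a b → R' b c → R' a c) ∧
     (∀ a b, R' a b → R' b a → a = b) ∧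
     (∀ a b, R' a b ∨ R' b a) ∧
     (∀ a b, F' a b ↔ (R' a b ∧ ¬ R' b a))) :=
  bubbling_factor_linear_order_general R hrefl hnegtrans s hs
end
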